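/- For each k with 1 ≤ k ≤ n, the minimum cardinality of sign(L) over all k-dimensional subspaces L of ℝ^n equals 3^k. -/

import Mathlib

open Matrix

noncomputable section

def signVec {n : ℕ} (x : Fin n → ℝ) : Fin n → SignType := fun i => SignType.sign (x i)

def signSet {n : ℕ} (L : Submodule ℝ (Fin n → ℝ)) : Set (Fin n → SignType) :=
  signVec '' (L : Set (Fin n → ℝ))

def IsRationalVec {n : ℕ} (v : Fin n → ℝ) : Prop := ∀ i, ∃ q : ℚ, v i = (q : ℝ)

def IsRationalSubspace {n : ℕ} (K : Submodule ℝ (Fin n → ℝ)) : Prop :=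
  ∃ s : Set (Fin n → ℝ), (∀ v ∈ s, IsRationalVec v) ∧ Submodule.span ℝ s = K

def IsRationalMatrix {m n : ℕ} (B : Matrix (Fin m) (Fin n) ℝ) : Prop :=
  ∀ i j, ∃ q : ℚ, B i j = (q : ℝ)

def mr {m n : ℕ} (A : Matrix (Fin m) (Fin n) SignType) : ℕ :=
  sInf {r | ∃ B : Matrix (Fin m) (Fin n) ℝ, (∀ i j, SignType.sign (B i j) = A i j) ∧ B.rank = r}

def SignPerp {n : ℕ} (c x : Fin n → SignType) : Prop :=
  (∀ i, c i = 0 ∨ x i = 0) ∨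
  (∃ i j, c i = x i ∧ c i ≠ 0 ∧ c j = -(x j) ∧ c j ≠ 0)

/-! Row reduction in disguise: if `L` has dimension `k`, the coordinate functionals restricted to
`L` span its dual, so `k` of them form a basis, and restriction to those `k` coordinates maps `L`
isomorphically onto `ℝ^k`. Hence every sign pattern on these coordinates is attained and
`|sign(L)| ≥ 3^k`; the span of `e₁, …, eₖ` has exactly `3^k` sign vectors. -/

open Function Set

namespace Submodule

variable {K ι : Type*} [Field K] [Finite ι]

theorem exists_restrict_linearEquiv (L : Submodule K (ι → K)) :
    ∃ (s : Set ι) (e : L ≃ₗ[K] (s → K)), ∀ x (i : s), e x i = (x : ι → K) i := by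
  let φ : ι → L → K := fun i x => (x : ι → K) i
  obtain ⟨s, -, -, hspan, hli⟩ :=
    exists_linearIndepOn_extension (linearIndepOn_empty K φ) (empty_subset univ)
  let r : L →ₗ[K] (s → K) := LinearMap.funLeft K K ((↑) : s → ι) ∘ₗ L.subtype
  have hsurj : Surjective r := by
    -- independence of the `φ i`, `i ∈ s`, is exactly surjectivity of `x ↦ (φ i x)ᵢ`
    have := span_flip_eq_top_iff_linearIndependent.2 hli.linearIndependent
    rwa [show range (flip fun i : s => φ i) = range r from rfl, ← LinearMap.coe_range, span_eq,
      LinearMap.range_eq_top] at this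
  have hinj : Injective r := by
    -- every `φ i` lies in the span of the `φ j`, `j ∈ s`, so it vanishes where they all do
    refine (injective_iff_map_eq_zero r).2 fun x hx => Subtype.ext <| funext fun i => ?_
    have hker : φ '' s ⊆ LinearMap.ker (LinearMap.proj x : (L → K) →ₗ[K] K) := by
      rintro _ ⟨j, hj, rfl⟩
      exact congrFun hx ⟨j, hj⟩
    exact span_le.2 hker (hspan (mem_image_of_mem φ (mem_univ i)))
  exact ⟨s, .ofBijective r ⟨hinj, hsurj⟩, fun _ _ => rfl⟩

end Submodule

theorem SignType.sign_coe {α : Type*} [Ring α] [LinearOrder α] [IsStrictOrderedRing α]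
    (s : SignType) : SignType.sign (s : α) = s := by
  cases s <;> simp

theorem three_pow_finrank_le_ncard_signSet {n : ℕ} (L : Submodule ℝ (Fin n → ℝ)) :
    3 ^ Module.finrank ℝ L ≤ (signSet L).ncard := by
  classical
  obtain ⟨s, e, he⟩ := L.exists_restrict_linearEquiv
  have hsurj : s.domRestrict '' signSet L = univ := by
    refine eq_univ_of_forall fun τ => ⟨_, mem_image_of_mem _ (e.symm fun i => (τ i : ℝ)).2, ?_⟩
    funext i
    change SignType.sign (((e.symm _ : L) : Fin n → ℝ) i) = τ i
    rw [← he, e.apply_symm_apply, SignType.sign_coe]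
  calc 3 ^ Module.finrank ℝ L = Nat.card (s → SignType) := by
        rw [e.finrank_eq, Module.finrank_fintype_fun_eq_card, Nat.card_fun,
          Nat.card_eq_fintype_card, Nat.card_eq_fintype_card]
        rfl
    _ = (s.domRestrict '' signSet L).ncard := by rw [hsurj, ncard_univ]
    _ ≤ (signSet L).ncard := ncard_image_le (toFinite _)

theorem signVec_extend_zero {n k : ℕ} (e : Fin k → Fin n) (y : Fin k → ℝ) :
    signVec (extend e y 0) = extend e (signVec y) 0 := by
  funext i
  simp only [signVec, apply_extend SignType.sign]
  rw [show SignType.sign ∘ (0 : Fin n → ℝ) = 0 from funext fun _ => sign_zero]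
  rfl

theorem signSet_range_extendByZero {n k : ℕ} (e : Fin k → Fin n) :
    signSet (LinearMap.range (ExtendByZero.linearMap ℝ e)) = range fun σ => extend e σ 0 := by
  ext τ
  constructor
  · rintro ⟨_, ⟨y, rfl⟩, rfl⟩
    exact ⟨signVec y, (signVec_extend_zero e y).symm⟩
  · rintro ⟨σ, rfl⟩
    refine ⟨_, ⟨fun j => (σ j : ℝ), rfl⟩, ?_⟩
    exact (signVec_extend_zero e _).trans (congrArg (extend e · 0) (funext fun j => SignType.sign_coe (σ j)))

theorem exists_finrank_eq_ncard_signSet_eq {n k : ℕ} (hk : k ≤ n) :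
    ∃ L : Submodule ℝ (Fin n → ℝ), Module.finrank ℝ L = k ∧ (signSet L).ncard = 3 ^ k := by
  have he : Injective (Fin.castLE hk) := Fin.castLE_injective hk
  refine ⟨LinearMap.range (ExtendByZero.linearMap ℝ (Fin.castLE hk)), ?_, ?_⟩
  · rw [LinearMap.finrank_range_of_inj (extend_injective he 0), Module.finrank_fin_fun]
  · rw [signSet_range_extendByZero, ncard_range_of_injective (extend_injective he 0), Nat.card_fun,
      Nat.card_eq_fintype_card, Nat.card_eq_fintype_card, Fintype.card_fin]
    rfl

theorem stmt_14_general {n k : ℕ} (hk2 : k ≤ n) :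
    IsLeast {c : ℕ | ∃ L : Submodule ℝ (Fin n → ℝ),
        Module.finrank ℝ L = k ∧ (signSet L).ncard = c} (3 ^ k) := by
  refine ⟨exists_finrank_eq_ncard_signSet_eq hk2, ?_⟩
  rintro c ⟨L, rfl, rfl⟩
  exact three_pow_finrank_le_ncard_signSet L

theorem stmt_14 {n k : ℕ} (hk1 : 1 ≤ k) (hk2 : k ≤ n) :
    IsLeast {c : ℕ | ∃ L : Submodule ℝ (Fin n → ℝ),
        Module.finrank ℝ L = k ∧ (signSet L).ncard = c} (3 ^ k) :=
  stmt_14_general hk2
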